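/- Let l₁, l₂ ≥ 1 be integers, let u : ℝ² → ℝ be u(x₁, x₂) = cos(l₁x₁)·cos(l₂x₂), and let v be the function induced by u on the flat torus T = (ℝ/2πℤ) × (ℝ/2πℤ). Then the open set {p ∈ T : v(p) ≠ 0} has exactly 4·l₁·l₂ connected components; that is, the eigenfunction v has exactly 4l₁l₂ nodal domains. (Together with the count of its 4l₁l₂ critical points, this shows the bound |C(u)| ≤ μ(u) − χ(M) is attained on the torus, where χ(T) = 0.) -/
import Mathlib


open Real

noncomputable section

/-- The flat torus `T = (ℝ/2πℤ) × (ℝ/2πℤ)`. -/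
abbrev Torus : Type := AddCircle (2 * Real.pi) × AddCircle (2 * Real.pi)

/-- The quotient map `π : ℝ² → T`. -/
def torusProj (x : ℝ × ℝ) : Torus :=
  ((x.1 : AddCircle (2 * Real.pi)), (x.2 : AddCircle (2 * Real.pi)))

open Set

namespace NodalAux

/-- Label function: floor of `l*x/π + 1/2`. -/
def Fl (l : ℤ) (x : ℝ) : ℤ := ⌊(l : ℝ) * x / π + 1 / 2⌋

lemma cos_ne_zero_iff2 {θ : ℝ} :
    Real.cos θ ≠ 0 ↔ ∀ n : ℤ, θ / π + 1 / 2 ≠ (n : ℝ) := by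
  have hπ : (π : ℝ) ≠ 0 := Real.pi_ne_zero
  rw [Ne, Real.cos_eq_zero_iff]
  constructor
  · intro h n hn
    have h1 : θ / π = (n : ℝ) - 1 / 2 := by linarith
    have h2 : θ = ((n : ℝ) - 1 / 2) * π := by
      rw [← h1, div_mul_cancel₀ _ hπ]
    exact h ⟨n - 1, by rw [h2]; push_cast; ring⟩
  · rintro h ⟨k, rfl⟩
    refine h (k + 1) ?_
    push_cast
    field_simp
    ring

lemma Fl_shift (l : ℤ) (x : ℝ) (m : ℤ) : Fl l (x + 2 * π * m) = Fl l x + 2 * l * m := by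
  unfold Fl
  have hπ : (π : ℝ) ≠ 0 := Real.pi_ne_zero
  have h : (l : ℝ) * (x + 2 * π * m) / π + 1 / 2
      = ((l : ℝ) * x / π + 1 / 2) + ((2 * l * m : ℤ) : ℝ) := by
    push_cast
    field_simp
    ring
  rw [h, Int.floor_add_intCast]

lemma cos_shift (l : ℤ) (x : ℝ) (m : ℤ) :
    Real.cos ((l : ℝ) * (x + 2 * π * m)) = Real.cos ((l : ℝ) * x) := by
  have h : (l : ℝ) * (x + 2 * π * m) = (l : ℝ) * x + ((l * m : ℤ) : ℝ) * (2 * π) := by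
    push_cast; ring
  rw [h, Real.cos_add_int_mul_two_pi]

/-- Open arc (in ℝ) with label `k`. -/
def Jset (l k : ℤ) : Set ℝ := {x : ℝ | (l : ℝ) * x / π + 1 / 2 ∈ Set.Ioo (k : ℝ) ((k : ℝ) + 1)}

lemma isOpen_Jset (l k : ℤ) : IsOpen (Jset l k) :=
  (isOpen_Ioo).preimage (by continuity)

lemma Jset_preconnected (l k : ℤ) (hl : 1 ≤ l) : IsPreconnected (Jset l k) := by
  apply Set.OrdConnected.isPreconnected
  constructor
  intro x hx y hy z hz
  have hl' : (0 : ℝ) ≤ (l : ℝ) := by exact_mod_cast (by omega : (0:ℤ) ≤ l)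
  have hπ : (0 : ℝ) < π := Real.pi_pos
  obtain ⟨hx1, hx2⟩ := hx
  obtain ⟨hy1, hy2⟩ := hy
  constructor
  · calc (k : ℝ) < (l : ℝ) * x / π + 1 / 2 := hx1
      _ ≤ (l : ℝ) * z / π + 1 / 2 := by gcongr; exact hz.1
  · calc (l : ℝ) * z / π + 1 / 2 ≤ (l : ℝ) * y / π + 1 / 2 := by gcongr; exact hz.2
      _ < (k : ℝ) + 1 := hy2

lemma mem_Jset_iff {l k : ℤ} {x : ℝ} :
    x ∈ Jset l k ↔ (Fl l x = k ∧ Real.cos ((l : ℝ) * x) ≠ 0) := by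
  constructor
  · rintro ⟨h1, h2⟩
    refine ⟨Int.floor_eq_iff.mpr ⟨le_of_lt h1, by exact_mod_cast h2⟩, ?_⟩
    rw [cos_ne_zero_iff2]
    intro n hn
    have hn' : (l : ℝ) * x / π + 1 / 2 = (n : ℝ) := hn
    rw [hn'] at h1 h2
    have c1 : k < n := by exact_mod_cast h1
    have c2 : (n : ℝ) < (k : ℝ) + 1 := h2
    have c2' : n < k + 1 := by exact_mod_cast c2
    omega
  · rintro ⟨h1, h2⟩
    have hfl := Int.floor_eq_iff.mp h1
    rw [cos_ne_zero_iff2] at h2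
    have hne : (l : ℝ) * x / π + 1 / 2 ≠ (k : ℝ) := by
      intro hc
      exact h2 k (by rw [← hc])
    exact ⟨lt_of_le_of_ne hfl.1 (Ne.symm hne), by exact_mod_cast hfl.2⟩

lemma mid_mem_Jset (l k : ℤ) (hl : 1 ≤ l) : (π * k / l) ∈ Jset l k := by
  have hl' : (l : ℝ) ≠ 0 := by
    exact_mod_cast (by omega : l ≠ 0)
  have hπ : (π : ℝ) ≠ 0 := Real.pi_ne_zero
  have h : (l : ℝ) * (π * k / l) / π + 1 / 2 = (k : ℝ) + 1 / 2 := by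
    field_simp
  simp only [Jset, Set.mem_setOf_eq, h, Set.mem_Ioo]
  constructor <;> linarith

lemma coe_shift (x : ℝ) (m : ℤ) :
    ((x + 2 * π * m : ℝ) : AddCircle (2 * π)) = (x : ℝ) := by
  have hmem : (2 * π * (m : ℝ)) ∈ AddSubgroup.zmultiples (2 * π) := by
    rw [AddSubgroup.mem_zmultiples_iff]
    exact ⟨m, by rw [zsmul_eq_mul]; ring⟩
  have h0 : ((2 * π * (m : ℝ) : ℝ) : AddCircle (2 * π)) = 0 :=
    (QuotientAddGroup.eq_zero_iff _).mpr hmem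
  calc ((x + 2 * π * m : ℝ) : AddCircle (2 * π))
      = (x : ℝ) + ((2 * π * (m : ℝ) : ℝ) : AddCircle (2 * π)) := rfl
    _ = (x : ℝ) := by rw [h0, add_zero]

/-- The induced label on the circle, with values in `ZMod (2l)`. -/
def Fbar (l : ℤ) (hl : 1 ≤ l) (a : AddCircle (2 * π)) : ZMod (2 * l).toNat :=
  Quotient.liftOn' a (fun x => ((Fl l x : ℤ) : ZMod (2 * l).toNat)) (by
    intro x y hxy
    rw [QuotientAddGroup.leftRel_apply] at hxy
    rw [AddSubgroup.mem_zmultiples_iff] at hxy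
    obtain ⟨m, hm⟩ := hxy
    rw [zsmul_eq_mul] at hm
    have hy : y = x + 2 * π * m := by linear_combination -hm
    have hn : ((2 * l).toNat : ℤ) = 2 * l := Int.toNat_of_nonneg (by omega)
    have hz : (((2 * l * m : ℤ)) : ZMod (2 * l).toNat) = 0 := by
      rw [ZMod.intCast_zmod_eq_zero_iff_dvd, hn]
      exact ⟨m, rfl⟩
    simp only [hy, Fl_shift]
    push_cast at hz ⊢
    linear_combination -hz)

lemma Fbar_coe (l : ℤ) (hl : 1 ≤ l) (x : ℝ) :
    Fbar l hl (x : ℝ) = ((Fl l x : ℤ) : ZMod (2 * l).toNat) := rfl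

end NodalAux

open NodalAux

theorem nodal_domain_count_of_cos_cos (l₁ l₂ : ℤ) (hl₁ : 1 ≤ l₁) (hl₂ : 1 ≤ l₂)
    (u : ℝ × ℝ → ℝ)
    (hu : u = fun x : ℝ × ℝ => Real.cos (l₁ * x.1) * Real.cos (l₂ * x.2))
    (v : Torus → ℝ)
    (hv : ∀ x, v (torusProj x) = u x) :
    (Nat.card (ConnectedComponents ↥{p : Torus | v p ≠ 0}) : ℤ) = 4 * l₁ * l₂ := by
  haveI : Fact (0 < 2 * Real.pi) := ⟨by positivity⟩
  subst hu
  set n₁ := (2 * l₁).toNat with hn₁def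
  set n₂ := (2 * l₂).toNat with hn₂def
  have hn₁ : (n₁ : ℤ) = 2 * l₁ := Int.toNat_of_nonneg (by omega)
  have hn₂ : (n₂ : ℤ) = 2 * l₂ := Int.toNat_of_nonneg (by omega)
  haveI : NeZero n₁ := ⟨by omega⟩
  haveI : NeZero n₂ := ⟨by omega⟩
  set S := {p : Torus | v p ≠ 0} with hSdef
  have hvp : ∀ x : ℝ × ℝ, v (torusProj x) = Real.cos (l₁ * x.1) * Real.cos (l₂ * x.2) :=
    fun x => hv x
  -- basic properties of the projection
  have hsurjP : Function.Surjective torusProj := by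
    rintro ⟨a, b⟩
    obtain ⟨x, -, hx⟩ := AddCircle.eq_coe_Ico a
    obtain ⟨y, -, hy⟩ := AddCircle.eq_coe_Ico b
    exact ⟨(x, y), by simp only [torusProj, hx, hy]⟩
  have hcontP : Continuous torusProj :=
    Continuous.prodMk (continuous_quotient_mk'.comp continuous_fst)
      (continuous_quotient_mk'.comp continuous_snd)
  have hopenP : IsOpenMap torusProj := by
    exact IsOpenMap.prodMap QuotientAddGroup.isOpenMap_coe QuotientAddGroup.isOpenMap_coe
  -- the labelling map
  set φ : ↥S → ZMod n₁ × ZMod n₂ :=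
    fun p => (Fbar l₁ hl₁ (p : Torus).1, Fbar l₂ hl₂ (p : Torus).2) with hφdef
  have hvalcast₁ : ∀ c : ZMod n₁, (((c.val : ℤ)) : ZMod n₁) = c := by
    intro c
    push_cast
    rw [ZMod.natCast_val, ZMod.cast_id]
  have hvalcast₂ : ∀ c : ZMod n₂, (((c.val : ℤ)) : ZMod n₂) = c := by
    intro c
    push_cast
    rw [ZMod.natCast_val, ZMod.cast_id]
  -- membership and value of φ on boxes
  have hmemS : ∀ (k₁ k₂ : ℤ) (y : ℝ × ℝ), y.1 ∈ Jset l₁ k₁ → y.2 ∈ Jset l₂ k₂ →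
      torusProj y ∈ S := by
    intro k₁ k₂ y hy1 hy2
    have hc1 := (mem_Jset_iff.mp hy1).2
    have hc2 := (mem_Jset_iff.mp hy2).2
    show v (torusProj y) ≠ 0
    rw [hvp]
    exact mul_ne_zero hc1 hc2
  have hφval : ∀ (k₁ k₂ : ℤ) (y : ℝ × ℝ) (h : torusProj y ∈ S),
      y.1 ∈ Jset l₁ k₁ → y.2 ∈ Jset l₂ k₂ →
      φ ⟨torusProj y, h⟩ = (((k₁ : ℤ) : ZMod n₁), ((k₂ : ℤ) : ZMod n₂)) := by
    intro k₁ k₂ y h hy1 hy2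
    have hf1 := (mem_Jset_iff.mp hy1).1
    have hf2 := (mem_Jset_iff.mp hy2).1
    show (Fbar l₁ hl₁ ((y.1 : ℝ) : AddCircle (2 * π)), Fbar l₂ hl₂ ((y.2 : ℝ) : AddCircle (2 * π))) = _
    rw [Fbar_coe, Fbar_coe, hf1, hf2]
  -- continuity of φ
  have hφcont : Continuous φ := by
    rw [continuous_iff_continuousAt]
    rintro ⟨p, hp⟩
    obtain ⟨x, rfl⟩ := hsurjP p
    have hpx : Real.cos (l₁ * x.1) * Real.cos (l₂ * x.2) ≠ 0 := by
      rw [← hvp x]; exact hp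
    have hc1 : Real.cos ((l₁ : ℝ) * x.1) ≠ 0 := left_ne_zero_of_mul hpx
    have hc2 : Real.cos ((l₂ : ℝ) * x.2) ≠ 0 := right_ne_zero_of_mul hpx
    have hx1 : x.1 ∈ Jset l₁ (Fl l₁ x.1) := mem_Jset_iff.mpr ⟨rfl, hc1⟩
    have hx2 : x.2 ∈ Jset l₂ (Fl l₂ x.2) := mem_Jset_iff.mpr ⟨rfl, hc2⟩
    have hOopen : IsOpen (torusProj '' (Jset l₁ (Fl l₁ x.1) ×ˢ Jset l₂ (Fl l₂ x.2))) :=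
      hopenP _ ((isOpen_Jset _ _).prod (isOpen_Jset _ _))
    have hpO : torusProj x ∈ torusProj '' (Jset l₁ (Fl l₁ x.1) ×ˢ Jset l₂ (Fl l₂ x.2)) :=
      ⟨x, ⟨hx1, hx2⟩, rfl⟩
    apply Filter.EventuallyEq.continuousAt
      (y := (((Fl l₁ x.1 : ℤ) : ZMod n₁), ((Fl l₂ x.2 : ℤ) : ZMod n₂)))
    filter_upwards [(hOopen.preimage continuous_subtype_val).mem_nhds hpO] with q hq
    obtain ⟨y, ⟨hy1, hy2⟩, hyq⟩ := hq
    have hq' : q = ⟨torusProj y, by rw [hyq]; exact q.2⟩ := Subtype.ext hyq.symm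
    rw [hq']
    exact hφval _ _ y _ hy1 hy2
  -- fibres of φ are preconnected
  have hfiber : ∀ c : ZMod n₁ × ZMod n₂, IsPreconnected (φ ⁻¹' {c}) := by
    rintro ⟨c₁, c₂⟩
    have himg : Subtype.val '' (φ ⁻¹' {(c₁, c₂)}) =
        torusProj '' (Jset l₁ (c₁.val : ℤ) ×ˢ Jset l₂ (c₂.val : ℤ)) := by
      apply Set.Subset.antisymm
      · rintro _ ⟨⟨p, hp⟩, hmem, rfl⟩
        obtain ⟨x, rfl⟩ := hsurjP p
        simp only [Set.mem_preimage, Set.mem_singleton_iff] at hmem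
        have hpx : Real.cos (l₁ * x.1) * Real.cos (l₂ * x.2) ≠ 0 := by
          rw [← hvp x]; exact hp
        have hc1 : Real.cos ((l₁ : ℝ) * x.1) ≠ 0 := left_ne_zero_of_mul hpx
        have hc2 : Real.cos ((l₂ : ℝ) * x.2) ≠ 0 := right_ne_zero_of_mul hpx
        have e1 : ((Fl l₁ x.1 : ℤ) : ZMod n₁) = ((c₁.val : ℤ) : ZMod n₁) := by
          rw [hvalcast₁ c₁]
          exact congrArg Prod.fst hmem
        have e2 : ((Fl l₂ x.2 : ℤ) : ZMod n₂) = ((c₂.val : ℤ) : ZMod n₂) := by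
          rw [hvalcast₂ c₂]
          exact congrArg Prod.snd hmem
        have d1 : (n₁ : ℤ) ∣ (c₁.val : ℤ) - Fl l₁ x.1 :=
          (ZMod.intCast_eq_intCast_iff_dvd_sub _ _ _).mp e1
        have d2 : (n₂ : ℤ) ∣ (c₂.val : ℤ) - Fl l₂ x.2 :=
          (ZMod.intCast_eq_intCast_iff_dvd_sub _ _ _).mp e2
        obtain ⟨m₁, hm₁⟩ := d1
        obtain ⟨m₂, hm₂⟩ := d2
        rw [hn₁] at hm₁
        rw [hn₂] at hm₂
        refine ⟨(x.1 + 2 * π * m₁, x.2 + 2 * π * m₂), ⟨?_, ?_⟩, ?_⟩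
        · rw [mem_Jset_iff]
          refine ⟨?_, ?_⟩
          · show Fl l₁ (x.1 + 2 * π * m₁) = (c₁.val : ℤ)
            rw [Fl_shift]
            linear_combination -hm₁
          · show Real.cos ((l₁ : ℝ) * (x.1 + 2 * π * m₁)) ≠ 0
            rw [cos_shift]
            exact hc1
        · rw [mem_Jset_iff]
          refine ⟨?_, ?_⟩
          · show Fl l₂ (x.2 + 2 * π * m₂) = (c₂.val : ℤ)
            rw [Fl_shift]
            linear_combination -hm₂
          · show Real.cos ((l₂ : ℝ) * (x.2 + 2 * π * m₂)) ≠ 0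
            rw [cos_shift]
            exact hc2
        · show torusProj _ = torusProj x
          simp only [torusProj, coe_shift]
      · rintro _ ⟨y, ⟨hy1, hy2⟩, rfl⟩
        refine ⟨⟨torusProj y, hmemS _ _ y hy1 hy2⟩, ?_, rfl⟩
        simp only [Set.mem_preimage, Set.mem_singleton_iff]
        rw [hφval _ _ y _ hy1 hy2, hvalcast₁, hvalcast₂]
    refine Topology.IsInducing.subtypeVal.isPreconnected_image.mp ?_
    rw [himg]
    exact ((Jset_preconnected l₁ _ hl₁).prod (Jset_preconnected l₂ _ hl₂)).image _
      hcontP.continuousOn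
  -- the induced map on connected components is a bijection
  have hLbij : Function.Bijective hφcont.connectedComponentsLift := by
    constructor
    · intro a b hab
      obtain ⟨p, rfl⟩ := ConnectedComponents.surjective_coe a
      obtain ⟨q, rfl⟩ := ConnectedComponents.surjective_coe b
      rw [hφcont.connectedComponentsLift_apply_coe,
        hφcont.connectedComponentsLift_apply_coe] at hab
      rw [ConnectedComponents.coe_eq_coe']
      have hsub := (hfiber (φ q)).subset_connectedComponent
        (x := q) (Set.mem_preimage.mpr rfl)
      exact hsub (Set.mem_preimage.mpr (by rw [hab]; rfl))
    · rintro ⟨c₁, c₂⟩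
      have hy1 := mid_mem_Jset l₁ (c₁.val : ℤ) hl₁
      have hy2 := mid_mem_Jset l₂ (c₂.val : ℤ) hl₂
      refine ⟨ConnectedComponents.mk
        ⟨torusProj (π * (c₁.val : ℤ) / l₁, π * (c₂.val : ℤ) / l₂),
          hmemS _ _ _ hy1 hy2⟩, ?_⟩
      rw [hφcont.connectedComponentsLift_apply_coe]
      rw [hφval _ _ _ _ hy1 hy2, hvalcast₁, hvalcast₂]
  have hcard : Nat.card (ConnectedComponents ↥S) = n₁ * n₂ := by
    rw [Nat.card_eq_of_bijective _ hLbij, Nat.card_prod, Nat.card_zmod, Nat.card_zmod]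
  rw [hcard]
  push_cast
  rw [hn₁, hn₂]
  ring

end
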